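/- arXiv:2302.04069 — 9 statements merged into one kernel-verified Lean document; each statement's English description precedes it below -/
import Mathlib

section
/- Let C be a symmetric monoidal category with unit object 𝟙. If (E₁, e₁ : 𝟙 → E₁) and (E₂, e₂ : 𝟙 → E₂) are idempotent objects of C, then there is at most one morphism f : E₁ → E₂ satisfying f ∘ e₁ = e₂. In other words, the full subcategory of the under category 𝟙/C spanned by the idempotent objects is a thin category (equivalent to a poset). -/
open CategoryTheory CategoryTheory.Limits MonoidalCategory

universe v u

/-- In a symmetric monoidal category, given two idempotent objects
`(E₁, e₁)` and `(E₂, e₂)` (i.e. `E ◁ e : E ⊗ 𝟙 ⟶ E ⊗ E` is an isomorphism),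
there is at most one morphism `f : E₁ ⟶ E₂` with `e₁ ≫ f = e₂`; that is, the full
subcategory of the under category `𝟙/C` spanned by the idempotent objects is thin. -/
theorem idempotent_hom_unique {C : Type u} [Category.{v} C] [MonoidalCategory C]
    [SymmetricCategory C] {E₁ E₂ : C} (e₁ : 𝟙_ C ⟶ E₁) (e₂ : 𝟙_ C ⟶ E₂)
    (h₁ : IsIso (E₁ ◁ e₁)) (h₂ : IsIso (E₂ ◁ e₂))
    (f g : E₁ ⟶ E₂) (hf : e₁ ≫ f = e₂) (hg : e₁ ≫ g = e₂) : f = g := by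
  -- Step 1 : `E₁ ◁ f = E₁ ◁ g`, by cancelling the iso `E₁ ◁ e₁`.
  have hfg : E₁ ◁ f = E₁ ◁ g := by
    have : E₁ ◁ e₁ ≫ E₁ ◁ f = E₁ ◁ e₁ ≫ E₁ ◁ g := by
      rw [← MonoidalCategory.whiskerLeft_comp, ← MonoidalCategory.whiskerLeft_comp, hf, hg]
    exact (cancel_epi (E₁ ◁ e₁)).mp this
  -- `e₁ ▷ E₁` is an iso (transport `h₁` through the braiding).
  have hb₁ : IsIso (e₁ ▷ E₁) := by
    have h := BraidedCategory.braiding_naturality_right E₁ e₁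
    have : e₁ ▷ E₁ = (β_ E₁ (𝟙_ C)).inv ≫ (E₁ ◁ e₁) ≫ (β_ E₁ E₁).hom := by
      rw [h]; simp
    rw [this]; infer_instance
  -- `e₂ ▷ E₂` is an iso (transport `h₂` through the braiding).
  have hb₂ : IsIso (e₂ ▷ E₂) := by
    have h := BraidedCategory.braiding_naturality_right E₂ e₂
    have : e₂ ▷ E₂ = (β_ E₂ (𝟙_ C)).inv ≫ (E₂ ◁ e₂) ≫ (β_ E₂ E₂).hom := by
      rw [h]; simp
    rw [this]; infer_instance
  -- `e₁ ▷ (E₁ ⊗ E₂)` is an iso (associator conjugate of `(e₁ ▷ E₁) ▷ E₂`).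
  have hbig : IsIso (e₁ ▷ (E₁ ⊗ E₂)) := by
    have h := associator_naturality_left e₁ E₁ E₂
    have : e₁ ▷ (E₁ ⊗ E₂) = (α_ (𝟙_ C) E₁ E₂).inv ≫ (e₁ ▷ E₁ ▷ E₂) ≫ (α_ E₁ E₁ E₂).hom := by
      rw [h]; simp
    rw [this]; infer_instance
  -- `E₁ ◁ (e₁ ▷ E₂)` is an iso (associator conjugate of `(E₁ ◁ e₁) ▷ E₂`).
  have hmid : IsIso (E₁ ◁ (e₁ ▷ E₂)) := by
    have h := associator_naturality_middle E₁ e₁ E₂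
    have : E₁ ◁ (e₁ ▷ E₂) =
        (α_ E₁ (𝟙_ C) E₂).inv ≫ ((E₁ ◁ e₁) ▷ E₂) ≫ (α_ E₁ E₁ E₂).hom := by
      rw [h]; simp
    rw [this]; infer_instance
  -- Step 2 : `e₁ ▷ E₂` is an iso.
  set a : 𝟙_ C ⊗ E₂ ⟶ E₁ ⊗ E₂ := e₁ ▷ E₂ with ha_def
  set k : E₁ ⊗ E₂ ⟶ 𝟙_ C ⊗ E₂ := (f ▷ E₂) ≫ inv (e₂ ▷ E₂) with hk_def
  have hak : a ≫ k = 𝟙 _ := by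
    rw [hk_def, ha_def, ← Category.assoc, ← comp_whiskerRight, hf, IsIso.hom_inv_id]
  have hwl : E₁ ◁ k = inv (E₁ ◁ a) := by
    apply IsIso.eq_inv_of_hom_inv_id
    rw [← MonoidalCategory.whiskerLeft_comp, hak, MonoidalCategory.whiskerLeft_id]
  have hka : k ≫ a = 𝟙 _ := by
    have hwp : E₁ ◁ (k ≫ a) = 𝟙 _ := by
      rw [MonoidalCategory.whiskerLeft_comp, hwl, IsIso.inv_hom_id]
    -- whisker exchange : `𝟙 ◁ (k ≫ a) ≫ e₁ ▷ (E₁ ⊗ E₂) = e₁ ▷ (E₁ ⊗ E₂) ≫ E₁ ◁ (k ≫ a)`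
    have hex := whisker_exchange e₁ (k ≫ a)
    rw [hwp, Category.comp_id] at hex
    have : 𝟙_ C ◁ (k ≫ a) = 𝟙_ C ◁ 𝟙 (E₁ ⊗ E₂) := by
      rw [MonoidalCategory.whiskerLeft_id]
      exact (cancel_mono (e₁ ▷ (E₁ ⊗ E₂))).mp (by rw [hex, Category.id_comp])
    have hnat := leftUnitor_naturality (k ≫ a)
    rw [this, MonoidalCategory.whiskerLeft_id, Category.id_comp] at hnat
    exact ((cancel_epi (λ_ (E₁ ⊗ E₂)).hom).mp (by rw [← hnat, Category.comp_id])).symm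
  have hiso_a : IsIso a := ⟨k, hak, hka⟩
  -- Step 3 : conclude via whisker exchange and the left unitor.
  have hone : 𝟙_ C ◁ f = 𝟙_ C ◁ g := by
    have hxf := whisker_exchange e₁ f
    have hxg := whisker_exchange e₁ g
    rw [hfg] at hxf
    rw [← hxg] at hxf
    exact (cancel_mono a).mp hxf
  have hnf := leftUnitor_naturality f
  have hng := leftUnitor_naturality g
  rw [hone, hng] at hnf
  exact ((cancel_epi (λ_ E₁).hom).mp hnf).symm
end

section
/- Let C be a symmetric monoidal category with unit object 𝟙. If (C₁, c₁ : C₁ → 𝟙) and (C₂, c₂ : C₂ → 𝟙) are coidempotent objects of C, then there is at most one morphism f : C₁ → C₂ satisfying c₂ ∘ f = c₁. In other words, the full subcategory of the over category C/𝟙 spanned by the coidempotent objects is a thin category (equivalent to a poset). -/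
/-!
Write `k = C₀ ◁ c ≫ ρ` and `l = c ▷ C₀ ≫ λ` for the two ways of capping a factor of `C₀ ⊗ C₀`.
The braiding makes `c ▷ C₀` invertible along with `C₀ ◁ c`, and then `k = l`: both agree after
composing with `c`, and whiskering by `C₀` can be cancelled. If `f, g : C₁ ⟶ C₂` lie over `𝟙`,
naturality gives `k₁ ≫ g = (g ⊗ f) ≫ k₂` and `l₁ ≫ f = (g ⊗ f) ≫ l₂`, hence `k₁ ≫ g = k₁ ≫ f`,
and `k₁` is invertible.
-/

open CategoryTheory MonoidalCategory

universe v u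

variable {C : Type u} [Category.{v} C] [MonoidalCategory C]

lemma isIso_whiskerRight_of_isIso_whiskerLeft [BraidedCategory C] {X Y Z : C} (f : Y ⟶ Z)
    [IsIso (X ◁ f)] : IsIso (f ▷ X) := by
  rw [(Iso.eq_comp_inv _).mpr (BraidedCategory.braiding_naturality_left f X)]
  infer_instance

lemma whiskerLeft_injective_of_epi_whiskerRight {C₀ X Y : C} (c : C₀ ⟶ 𝟙_ C) [Epi (c ▷ X)] :
    Function.Injective (fun u : X ⟶ Y => C₀ ◁ u) := by
  intro u v h
  rw [← whiskerLeft_iff, ← cancel_epi (c ▷ X), ← whisker_exchange, ← whisker_exchange]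
  exact congrArg (· ≫ c ▷ Y) h

lemma whiskerLeft_comp_rightUnitor_eq_whiskerRight_comp_leftUnitor {C₀ : C} (c : C₀ ⟶ 𝟙_ C)
    [IsIso (C₀ ◁ c)] [IsIso (c ▷ C₀)] :
    C₀ ◁ c ≫ (ρ_ C₀).hom = c ▷ C₀ ≫ (λ_ C₀).hom := by
  have capped : (C₀ ◁ c ≫ (ρ_ C₀).hom) ≫ c = (c ▷ C₀ ≫ (λ_ C₀).hom) ≫ c := by
    simp only [Category.assoc, ← rightUnitor_naturality, ← leftUnitor_naturality, unitors_equal]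
    rw [← Category.assoc, ← Category.assoc, whisker_exchange]
  have : IsIso (c ▷ (C₀ ⊗ C₀)) := by rw [whiskerRight_tensor]; infer_instance
  apply whiskerLeft_injective_of_epi_whiskerRight c
  rw [← cancel_mono (C₀ ◁ c)]
  simpa only [← MonoidalCategory.whiskerLeft_comp] using congrArg (C₀ ◁ ·) capped

lemma whiskerLeft_comp_rightUnitor_naturality {X Y X' Y' : C} (f : X ⟶ Y) (g : X' ⟶ Y')
    (c : Y' ⟶ 𝟙_ C) : X ◁ (g ≫ c) ≫ (ρ_ X).hom ≫ f = (f ⊗ₘ g) ≫ Y ◁ c ≫ (ρ_ Y).hom := by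
  rw [← rightUnitor_naturality, MonoidalCategory.whiskerLeft_comp, Category.assoc,
    whisker_exchange_assoc, whisker_exchange_assoc, tensorHom_def_assoc]

lemma whiskerRight_comp_leftUnitor_naturality {X Y X' Y' : C} (f : X ⟶ Y) (g : X' ⟶ Y')
    (c : Y' ⟶ 𝟙_ C) : (g ≫ c) ▷ X ≫ (λ_ X).hom ≫ f = (g ⊗ₘ f) ≫ c ▷ Y ≫ (λ_ Y).hom := by
  rw [← leftUnitor_naturality, comp_whiskerRight, Category.assoc,
    ← whisker_exchange_assoc, ← whisker_exchange_assoc, tensorHom_def'_assoc]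

/-- In a symmetric monoidal category, given two coidempotent objects
`(C₁, c₁)` and `(C₂, c₂)` (i.e. `C₀ ◁ c : C₀ ⊗ C₀ ⟶ C₀ ⊗ 𝟙` is an isomorphism),
there is at most one morphism `f : C₁ ⟶ C₂` with `f ≫ c₂ = c₁`; that is, the full
subcategory of the over category `C/𝟙` spanned by the coidempotent objects is thin. -/
theorem coidempotent_hom_unique {C : Type u} [Category.{v} C] [MonoidalCategory C]
    [SymmetricCategory C] {C₁ C₂ : C} (c₁ : C₁ ⟶ 𝟙_ C) (c₂ : C₂ ⟶ 𝟙_ C)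
    (h₁ : IsIso (C₁ ◁ c₁)) (h₂ : IsIso (C₂ ◁ c₂))
    (f g : C₁ ⟶ C₂) (hf : f ≫ c₂ = c₁) (hg : g ≫ c₂ = c₁) : f = g := by
  have := isIso_whiskerRight_of_isIso_whiskerLeft (X := C₁) c₁
  have := isIso_whiskerRight_of_isIso_whiskerLeft (X := C₂) c₂
  have caps₁ := whiskerLeft_comp_rightUnitor_eq_whiskerRight_comp_leftUnitor c₁
  have caps₂ := whiskerLeft_comp_rightUnitor_eq_whiskerRight_comp_leftUnitor c₂
  rw [← cancel_epi (C₁ ◁ c₁ ≫ (ρ_ C₁).hom)]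
  calc (C₁ ◁ c₁ ≫ (ρ_ C₁).hom) ≫ f = (g ≫ c₂) ▷ C₁ ≫ (λ_ C₁).hom ≫ f := by
        rw [caps₁, hg, Category.assoc]
    _ = (g ⊗ₘ f) ≫ c₂ ▷ C₂ ≫ (λ_ C₂).hom := whiskerRight_comp_leftUnitor_naturality f g c₂
    _ = (g ⊗ₘ f) ≫ C₂ ◁ c₂ ≫ (ρ_ C₂).hom := by rw [caps₂]
    _ = C₁ ◁ (f ≫ c₂) ≫ (ρ_ C₁).hom ≫ g := (whiskerLeft_comp_rightUnitor_naturality g f c₂).symm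
    _ = (C₁ ◁ c₁ ≫ (ρ_ C₁).hom) ≫ g := by rw [hf, Category.assoc]
end

section
/- Let C be a symmetric monoidal category with unit object 𝟙, let L : C ⥤ C be an endofunctor and η : id_C ⟶ L a natural transformation such that for every object X both L(η_X) and η_{L X} are isomorphisms (i.e. (L, η) is a localization). Set E = L(𝟙) and e = η_𝟙 : 𝟙 → E. Suppose L is smashing, i.e. there is a natural isomorphism α : L ≅ E ⊗ − such that for every X the composite α_X ∘ η_X equals (e ⊗ id_X) precomposed with the inverse left unitor X ≅ 𝟙 ⊗ X. Then (E, e) is an idempotent object of C. -/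
open CategoryTheory CategoryTheory.Limits MonoidalCategory

universe v u

/-- Let `C` be a symmetric monoidal category, `(L, η)` a localization of `C`
(i.e. `L (η_X)` and `η_{L X}` are isomorphisms for every `X`), and set `E = L(𝟙)`,
`e = η_𝟙 : 𝟙 ⟶ E`.  If `L` is smashing, i.e. there is a natural isomorphism `α : L ≅ E ⊗ −`
with `α_X ∘ η_X = (e ⊗ id_X) ∘ λ⁻¹` for all `X`, then `(E, e)` is an idempotent object:
`E ◁ e : E ⊗ 𝟙 ⟶ E ⊗ E` is an isomorphism. -/
theorem smashing_localization_idempotent {C : Type u} [Category.{v} C] [MonoidalCategory C]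
    [SymmetricCategory C] (L : C ⥤ C) (η : 𝟭 C ⟶ L)
    (hL : ∀ X : C, IsIso (L.map (η.app X)))
    (hη : ∀ X : C, IsIso (η.app (L.obj X)))
    (α : L ≅ tensorLeft (L.obj (𝟙_ C)))
    (hα : ∀ X : C, η.app X ≫ α.hom.app X = (λ_ X).inv ≫ (η.app (𝟙_ C) ▷ X)) :
    IsIso ((L.obj (𝟙_ C)) ◁ η.app (𝟙_ C)) := by
  have h1 : IsIso (η.app (𝟙_ C) ▷ L.obj (𝟙_ C)) := by
    have heq : η.app (𝟙_ C) ▷ L.obj (𝟙_ C) =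
        (λ_ (L.obj (𝟙_ C))).hom ≫ η.app (L.obj (𝟙_ C)) ≫ α.hom.app (L.obj (𝟙_ C)) := by
      rw [hα (L.obj (𝟙_ C))]; simp
    rw [heq]
    have := hη (𝟙_ C)
    infer_instance
  have h2 : L.obj (𝟙_ C) ◁ η.app (𝟙_ C) ≫ (β_ (L.obj (𝟙_ C)) (L.obj (𝟙_ C))).hom =
      (β_ (L.obj (𝟙_ C)) (𝟙_ C)).hom ≫ η.app (𝟙_ C) ▷ L.obj (𝟙_ C) :=
    BraidedCategory.braiding_naturality_right _ _
  have h3 : L.obj (𝟙_ C) ◁ η.app (𝟙_ C) =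
      (β_ (L.obj (𝟙_ C)) (𝟙_ C)).hom ≫ (η.app (𝟙_ C) ▷ L.obj (𝟙_ C)) ≫
        (β_ (L.obj (𝟙_ C)) (L.obj (𝟙_ C))).inv := by
    rw [← Category.assoc, ← h2]; simp
  rw [h3]
  infer_instance
end

section
/- Let C be a symmetric monoidal category with unit object 𝟙. Then: (1) the identity morphism id : 𝟙 → 𝟙 is a coidempotent object, and every coidempotent object (C₀, c) admits a morphism to it over 𝟙 (namely c itself); (2) if (C₁, c₁) and (C₂, c₂) are coidempotent objects, then C₁ ⊗ C₂ equipped with the composite C₁ ⊗ C₂ → 𝟙 ⊗ 𝟙 ≅ 𝟙 of c₁ ⊗ c₂ with the unitor is a coidempotent object; (3) C₁ ⊗ C₂ admits morphisms of coidempotent objects to both (C₁, c₁) and (C₂, c₂); and (4) any coidempotent object (D, d) admitting morphisms of coidempotent objects to both (C₁, c₁) and (C₂, c₂) admits a morphism of coidempotent objects to (C₁ ⊗ C₂, c₁ ⊗ c₂). Hence the preorder of coidempotent objects has finite meets, with greatest element 𝟙 and binary meet given by the tensor product. -/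
/-!
If `C₀ ◁ c` is invertible then so is `(Z ⊗ C₀) ◁ c`, and, through the braiding, `(C₀ ⊗ Z) ◁ c`;
hence `(C₁ ⊗ C₂) ◁ -` inverts `c₁ ▷ C₂` and `c₂`, and `(c₁ ⊗ c₂) ≫ λ = c₁ ▷ C₂ ≫ λ ≫ c₂`. For
the meet, the inverse of `D ◁ d` gives a diagonal `D ⟶ D ⊗ D` over `𝟙`, along which the two given
morphisms are tensored.
-/

open CategoryTheory CategoryTheory.Limits MonoidalCategory

universe v u

variable {C : Type u} [Category.{v} C] [MonoidalCategory C]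

/-- `c : C₀ ⟶ 𝟙` is a coidempotent object if `C₀ ◁ c : C₀ ⊗ C₀ ⟶ C₀ ⊗ 𝟙` is invertible. -/
def Coidempotent {C₀ : C} (c : C₀ ⟶ 𝟙_ C) : Prop := IsIso (C₀ ◁ c)

lemma isIso_whiskerLeft_of_iso {X Y Z W : C} (e : X ≅ Y) (f : Z ⟶ W) [IsIso (Y ◁ f)] :
    IsIso (X ◁ f) := by
  have h : X ◁ f = e.hom ▷ Z ≫ Y ◁ f ≫ e.inv ▷ W := by
    rw [← whisker_exchange_assoc, ← comp_whiskerRight, Iso.hom_inv_id, id_whiskerRight,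
      Category.comp_id]
  rw [h]
  infer_instance

lemma isIso_tensor_whiskerLeft (X : C) {Y Z W : C} (f : Z ⟶ W) [IsIso (Y ◁ f)] :
    IsIso ((X ⊗ Y) ◁ f) := by
  rw [tensor_whiskerLeft]
  infer_instance

lemma isIso_whiskerLeft_whiskerRight {X Y Z : C} (f : Y ⟶ Z) (W : C) [IsIso (X ◁ f)] :
    IsIso (X ◁ f ▷ W) := by
  rw [whisker_assoc_symm]
  infer_instance

lemma tensorHom_comp_leftUnitor_eq_whiskerRight_comp {C₁ C₂ : C} (c₁ : C₁ ⟶ 𝟙_ C)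
    (c₂ : C₂ ⟶ 𝟙_ C) :
    (c₁ ⊗ₘ c₂) ≫ (λ_ (𝟙_ C)).hom = (c₁ ▷ C₂ ≫ (λ_ C₂).hom) ≫ c₂ := by
  simp [MonoidalCategory.tensorHom_def]

lemma tensorHom_comp_leftUnitor_eq_whiskerLeft_comp {C₁ C₂ : C} (c₁ : C₁ ⟶ 𝟙_ C)
    (c₂ : C₂ ⟶ 𝟙_ C) :
    (c₁ ⊗ₘ c₂) ≫ (λ_ (𝟙_ C)).hom = (C₁ ◁ c₂ ≫ (ρ_ C₁).hom) ≫ c₁ := by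
  simp [MonoidalCategory.tensorHom_def', unitors_equal]

lemma coidempotent_id : Coidempotent (𝟙 (𝟙_ C)) := by
  rw [Coidempotent, whiskerLeft_id]
  infer_instance

namespace Coidempotent

variable {C₀ : C} {c : C₀ ⟶ 𝟙_ C}

lemma isIso_tensor_whiskerLeft (hc : Coidempotent c) (X : C) : IsIso ((X ⊗ C₀) ◁ c) :=
  have : IsIso (C₀ ◁ c) := hc
  _root_.isIso_tensor_whiskerLeft X c

lemma isIso_whiskerLeft_tensor [BraidedCategory C] (hc : Coidempotent c) (X : C) :
    IsIso ((C₀ ⊗ X) ◁ c) :=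
  have := hc.isIso_tensor_whiskerLeft X
  isIso_whiskerLeft_of_iso (β_ C₀ X) c

lemma tensor [BraidedCategory C] {C₁ C₂ : C} {c₁ : C₁ ⟶ 𝟙_ C} {c₂ : C₂ ⟶ 𝟙_ C}
    (h₁ : Coidempotent c₁) (h₂ : Coidempotent c₂) :
    Coidempotent ((c₁ ⊗ₘ c₂) ≫ (λ_ (𝟙_ C)).hom) := by
  have := h₁.isIso_whiskerLeft_tensor C₂
  have := h₂.isIso_tensor_whiskerLeft C₁
  have := isIso_whiskerLeft_whiskerRight (X := C₁ ⊗ C₂) c₁ C₂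
  rw [Coidempotent, tensorHom_comp_leftUnitor_eq_whiskerRight_comp, whiskerLeft_comp,
    whiskerLeft_comp]
  infer_instance

lemma exists_diag (hc : Coidempotent c) :
    ∃ δ : C₀ ⟶ C₀ ⊗ C₀, δ ≫ (c ⊗ₘ c) ≫ (λ_ (𝟙_ C)).hom = c := by
  have : IsIso (C₀ ◁ c) := hc
  refine ⟨(ρ_ C₀).inv ≫ inv (C₀ ◁ c), ?_⟩
  rw [tensorHom_comp_leftUnitor_eq_whiskerLeft_comp]
  simp

lemma exists_lift_tensor {C₁ C₂ D : C} {c₁ : C₁ ⟶ 𝟙_ C} {c₂ : C₂ ⟶ 𝟙_ C} {d : D ⟶ 𝟙_ C}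
    (hd : Coidempotent d) {f : D ⟶ C₁} {g : D ⟶ C₂} (hf : f ≫ c₁ = d) (hg : g ≫ c₂ = d) :
    ∃ h : D ⟶ C₁ ⊗ C₂, h ≫ (c₁ ⊗ₘ c₂) ≫ (λ_ (𝟙_ C)).hom = d := by
  obtain ⟨δ, hδ⟩ := hd.exists_diag
  refine ⟨δ ≫ (f ⊗ₘ g), ?_⟩
  rw [Category.assoc, tensorHom_comp_tensorHom_assoc, hf, hg, hδ]

end Coidempotent

/-- In a symmetric monoidal category:
(1) `id : 𝟙 ⟶ 𝟙` is a coidempotent object and every coidempotent object `(C₀, c)` admits a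
morphism over `𝟙` to it, namely `c` itself;
(2) for coidempotent objects `(C₁, c₁)`, `(C₂, c₂)`, the tensor product `C₁ ⊗ C₂` with
`(c₁ ⊗ c₂) ≫ λ : C₁ ⊗ C₂ ⟶ 𝟙 ⊗ 𝟙 ≅ 𝟙` is a coidempotent object;
(3) `C₁ ⊗ C₂` admits morphisms of coidempotent objects to both `(C₁, c₁)` and `(C₂, c₂)`;
(4) any coidempotent object `(D, d)` admitting morphisms of coidempotent objects to both
`(C₁, c₁)` and `(C₂, c₂)` admits one to `(C₁ ⊗ C₂, (c₁ ⊗ c₂) ≫ λ)`.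
Hence the preorder of coidempotent objects has finite meets, with top `𝟙` and binary meets
given by tensoring. -/
theorem coidempotent_finite_meets [SymmetricCategory C] :
    (Coidempotent (𝟙 (𝟙_ C)) ∧
      ∀ {C₀ : C} (c : C₀ ⟶ 𝟙_ C), Coidempotent c → c ≫ 𝟙 (𝟙_ C) = c) ∧
    ∀ {C₁ C₂ : C} (c₁ : C₁ ⟶ 𝟙_ C) (c₂ : C₂ ⟶ 𝟙_ C),
      Coidempotent c₁ → Coidempotent c₂ →
        Coidempotent ((c₁ ⊗ₘ c₂) ≫ (λ_ (𝟙_ C)).hom) ∧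
        (∃ f : C₁ ⊗ C₂ ⟶ C₁, f ≫ c₁ = (c₁ ⊗ₘ c₂) ≫ (λ_ (𝟙_ C)).hom) ∧
        (∃ f : C₁ ⊗ C₂ ⟶ C₂, f ≫ c₂ = (c₁ ⊗ₘ c₂) ≫ (λ_ (𝟙_ C)).hom) ∧
        ∀ {D : C} (d : D ⟶ 𝟙_ C), Coidempotent d →
          (∃ f : D ⟶ C₁, f ≫ c₁ = d) → (∃ f : D ⟶ C₂, f ≫ c₂ = d) →
          ∃ f : D ⟶ C₁ ⊗ C₂, f ≫ ((c₁ ⊗ₘ c₂) ≫ (λ_ (𝟙_ C)).hom) = d := by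
  refine ⟨⟨coidempotent_id, fun c _ => Category.comp_id c⟩,
    fun {C₁ C₂} c₁ c₂ h₁ h₂ => ⟨h₁.tensor h₂, ?_, ?_, ?_⟩⟩
  · exact ⟨_, (tensorHom_comp_leftUnitor_eq_whiskerLeft_comp c₁ c₂).symm⟩
  · exact ⟨_, (tensorHom_comp_leftUnitor_eq_whiskerRight_comp c₁ c₂).symm⟩
  · rintro D d hd ⟨f, hf⟩ ⟨g, hg⟩
    exact hd.exists_lift_tensor hf hg
end

section
/- Let C be a symmetric monoidal category with unit object 𝟙 having finite colimits and such that the tensor product preserves finite colimits in each variable. Let (C₁, c₁), (C₂, c₂), (C₃, c₃) be coidempotent objects, write c₁ ∨ c₂ for the join of c₁ and c₂ (the pushout of C₁ ← C₁ ⊗ C₂ → C₂ with its induced morphism to 𝟙) and c ∧ c' for the meet (tensor product) of coidempotent objects. Then the distributive law holds: (c₁ ∨ c₂) ∧ c₃ and (c₁ ∧ c₃) ∨ (c₂ ∧ c₃) are isomorphic as coidempotent objects, i.e. each admits a morphism of coidempotent objects to the other. Equivalently, tensoring the pushout square defining c₁ ∨ c₂ with C₃ yields the pushout square defining (c₁ ∧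 c₃) ∨ (c₂ ∧ c₃). -/
/-!
For a coidempotent `c : A ⟶ 𝟙`, the map `A ⊗ A ⟶ A` killing the second factor is invertible,
and by a braiding argument it agrees with the map killing the first factor. Its inverse is a
"diagonal" `A ⟶ A ⊗ A`, and `X ⊗ Y ⊗ A ⟶ X ⊗ Y ⊗ A ⊗ A ≅ (X ⊗ A) ⊗ (Y ⊗ A)` is an isomorphism
carrying the span `X ⟵ X ⊗ Y ⟶ Y` tensored with `A` onto the span defining the join of the
meets `a ∧ c` and `b ∧ c`. Since `- ⊗ A` preserves pushouts, the join square of `a, b` tensored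
with `A` is therefore a pushout square for `(a ∧ c) ∨ (b ∧ c)`.
-/

open CategoryTheory CategoryTheory.Limits MonoidalCategory

universe v u

variable {C : Type u} [Category.{v} C] [MonoidalCategory C]

/-- The meet of two coidempotent objects: the induced morphism `C₁ ⊗ C₂ ⟶ 𝟙 ⊗ 𝟙 ≅ 𝟙`. -/
def meetHom {C₁ C₂ : C} (c₁ : C₁ ⟶ 𝟙_ C) (c₂ : C₂ ⟶ 𝟙_ C) : C₁ ⊗ C₂ ⟶ 𝟙_ C :=
  (c₁ ⊗ₘ c₂) ≫ (λ_ (𝟙_ C)).hom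

/-- The first leg `C₁ ⊗ C₂ ⟶ C₁` of the span whose pushout computes the join. -/
def joinFst {C₁ C₂ : C} (_ : C₁ ⟶ 𝟙_ C) (c₂ : C₂ ⟶ 𝟙_ C) : C₁ ⊗ C₂ ⟶ C₁ :=
  (C₁ ◁ c₂) ≫ (ρ_ C₁).hom

/-- The second leg `C₁ ⊗ C₂ ⟶ C₂` of the span whose pushout computes the join. -/
def joinSnd {C₁ C₂ : C} (c₁ : C₁ ⟶ 𝟙_ C) (_ : C₂ ⟶ 𝟙_ C) : C₁ ⊗ C₂ ⟶ C₂ :=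
  (c₁ ▷ C₂) ≫ (λ_ C₂).hom

lemma whiskerRight_comp_meetHom {X Y Z : C} (p : X ⟶ Y) (v : Y ⟶ 𝟙_ C) (c : Z ⟶ 𝟙_ C) :
    (p ▷ Z) ≫ meetHom v c = meetHom (p ≫ v) c := by
  rw [meetHom, meetHom, ← Category.assoc, ← tensorHom_id, tensorHom_comp_tensorHom,
    Category.id_comp]

section Braided

variable [BraidedCategory C]

lemma tensorμ_comp_joinFst_meetHom {X Y A : C} (a : X ⟶ 𝟙_ C) (b : Y ⟶ 𝟙_ C)
    (c : A ⟶ 𝟙_ C) :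
    tensorμ X Y A A ≫ joinFst (meetHom a c) (meetHom b c) =
      joinFst a b ⊗ₘ ((A ◁ c) ≫ (ρ_ A).hom) := by
  have hμ : tensorμ X Y A A ≫ ((X ⊗ A) ◁ (b ⊗ₘ c)) =
      ((X ◁ b) ⊗ₘ (A ◁ c)) ≫ tensorμ X (𝟙_ C) A (𝟙_ C) := by
    simpa using (tensorμ_natural (𝟙 X) b (𝟙 A) c).symm
  rw [joinFst, meetHom, MonoidalCategory.whiskerLeft_comp, ← Category.assoc,
    ← Category.assoc, hμ, Category.assoc, Category.assoc, ← rightUnitor_monoidal,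
    tensorHom_comp_tensorHom]
  rfl

lemma tensorμ_comp_joinSnd_meetHom {X Y A : C} (a : X ⟶ 𝟙_ C) (b : Y ⟶ 𝟙_ C)
    (c : A ⟶ 𝟙_ C) :
    tensorμ X Y A A ≫ joinSnd (meetHom a c) (meetHom b c) =
      joinSnd a b ⊗ₘ ((c ▷ A) ≫ (λ_ A).hom) := by
  have hμ : tensorμ X Y A A ≫ ((a ⊗ₘ c) ▷ (Y ⊗ A)) =
      ((a ▷ Y) ⊗ₘ (c ▷ A)) ≫ tensorμ (𝟙_ C) Y (𝟙_ C) A := by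
    simpa using (tensorμ_natural a (𝟙 Y) c (𝟙 A)).symm
  rw [joinSnd, meetHom, comp_whiskerRight, ← Category.assoc, ← Category.assoc, hμ,
    Category.assoc, Category.assoc, ← leftUnitor_monoidal, tensorHom_comp_tensorHom]
  rfl

end Braided

namespace Coidempotent

variable {A : C} {c : A ⟶ 𝟙_ C}

noncomputable def tensorSelfIso (h : Coidempotent c) : A ⊗ A ≅ A :=
  haveI : IsIso (A ◁ c) := h
  asIso (A ◁ c) ≪≫ ρ_ A

lemma tensorSelfIso_hom (h : Coidempotent c) :
    h.tensorSelfIso.hom = (A ◁ c) ≫ (ρ_ A).hom := rfl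

section Braided

variable [BraidedCategory C]

lemma whiskerRight_comp_leftUnitor_hom (h : Coidempotent c) :
    (c ▷ A) ≫ (λ_ A).hom = (A ◁ c) ≫ (ρ_ A).hom := by
  have : IsIso (A ◁ c) := h
  have hβ : (c ▷ A) ≫ (λ_ A).hom = (β_ A A).hom ≫ (A ◁ c) ≫ (ρ_ A).hom := by
    rw [← BraidedCategory.braiding_naturality_left_assoc, braiding_tensorUnit_left]
    simp
  have : IsIso ((c ▷ A) ≫ (λ_ A).hom) := by rw [hβ]; infer_instance
  have hc : ((c ▷ A) ≫ (λ_ A).hom) ≫ c = ((A ◁ c) ≫ (ρ_ A).hom) ≫ c := by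
    rw [Category.assoc, Category.assoc, ← leftUnitor_naturality, ← rightUnitor_naturality,
      ← whisker_exchange_assoc, unitors_equal]
  have hA : ((c ▷ A) ≫ (λ_ A).hom) ▷ A = ((A ◁ c) ≫ (ρ_ A).hom) ▷ A := by
    rw [← cancel_mono ((c ▷ A) ≫ (λ_ A).hom), ← comp_whiskerRight_assoc,
      ← comp_whiskerRight_assoc, hc]
  -- `x ↦ x ▷ A ≫ (A ◁ c) ≫ ρ` is precomposition with the epimorphism `(A ⊗ A) ◁ c ≫ ρ`.
  have hnat : ∀ x : A ⊗ A ⟶ A,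
      ((A ⊗ A) ◁ c) ≫ (ρ_ (A ⊗ A)).hom ≫ x = (x ▷ A) ≫ (A ◁ c) ≫ (ρ_ A).hom := by
    intro x
    rw [← rightUnitor_naturality, whisker_exchange_assoc]
  have : IsIso ((A ⊗ A) ◁ c) := by rw [tensor_whiskerLeft]; infer_instance
  rw [← cancel_epi (((A ⊗ A) ◁ c) ≫ (ρ_ (A ⊗ A)).hom), Category.assoc, Category.assoc, hnat,
    hnat, hA]

noncomputable def distribIso (h : Coidempotent c) (X Y : C) :
    (X ⊗ Y) ⊗ A ≅ (X ⊗ A) ⊗ (Y ⊗ A) :=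
  whiskerLeftIso (X ⊗ Y) h.tensorSelfIso.symm ≪≫
    ⟨tensorμ X Y A A, tensorδ X Y A A, tensorμ_tensorδ X Y A A, tensorδ_tensorμ X Y A A⟩

lemma distribIso_hom_comp_joinFst (h : Coidempotent c) {X Y : C} (a : X ⟶ 𝟙_ C)
    (b : Y ⟶ 𝟙_ C) :
    (h.distribIso X Y).hom ≫ joinFst (meetHom a c) (meetHom b c) = joinFst a b ▷ A := by
  rw [distribIso, Iso.trans_hom, whiskerLeftIso_hom, Iso.symm_hom, Category.assoc,
    tensorμ_comp_joinFst_meetHom, ← h.tensorSelfIso_hom, ← id_tensorHom,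
    tensorHom_comp_tensorHom, Category.id_comp, Iso.inv_hom_id, tensorHom_id]

lemma distribIso_hom_comp_joinSnd (h : Coidempotent c) {X Y : C} (a : X ⟶ 𝟙_ C)
    (b : Y ⟶ 𝟙_ C) :
    (h.distribIso X Y).hom ≫ joinSnd (meetHom a c) (meetHom b c) = joinSnd a b ▷ A := by
  rw [distribIso, Iso.trans_hom, whiskerLeftIso_hom, Iso.symm_hom, Category.assoc,
    tensorμ_comp_joinSnd_meetHom, h.whiskerRight_comp_leftUnitor_hom, ← h.tensorSelfIso_hom,
    ← id_tensorHom, tensorHom_comp_tensorHom, Category.id_comp, Iso.inv_hom_id, tensorHom_id]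

lemma isPushout_whiskerRight (h : Coidempotent c) {X Y P : C} {a : X ⟶ 𝟙_ C}
    {b : Y ⟶ 𝟙_ C} {i : X ⟶ P} {j : Y ⟶ P}
    [PreservesColimit (span (joinFst a b) (joinSnd a b)) (tensorRight A)]
    (hP : IsPushout (joinFst a b) (joinSnd a b) i j) :
    IsPushout (joinFst (meetHom a c) (meetHom b c)) (joinSnd (meetHom a c) (meetHom b c))
      (i ▷ A) (j ▷ A) :=
  (hP.map (tensorRight A)).of_iso (h.distribIso X Y) (Iso.refl _) (Iso.refl _) (Iso.refl _)
    (by simpa using (h.distribIso_hom_comp_joinFst a b).symm)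
    (by simpa using (h.distribIso_hom_comp_joinSnd a b).symm)
    (by simp) (by simp)

end Braided

end Coidempotent

theorem coidempotent_distrib_general [SymmetricCategory C] [HasFiniteColimits C]
    (hR : ∀ X : C, PreservesFiniteColimits (tensorRight X))
    {C₁ C₂ C₃ : C} (c₁ : C₁ ⟶ 𝟙_ C) (c₂ : C₂ ⟶ 𝟙_ C) (c₃ : C₃ ⟶ 𝟙_ C)
    (h₃ : Coidempotent c₃)
    (v : pushout (joinFst c₁ c₂) (joinSnd c₁ c₂) ⟶ 𝟙_ C)
    (hv₁ : pushout.inl _ _ ≫ v = c₁) (hv₂ : pushout.inr _ _ ≫ v = c₂)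
    (w : pushout (joinFst (meetHom c₁ c₃) (meetHom c₂ c₃))
        (joinSnd (meetHom c₁ c₃) (meetHom c₂ c₃)) ⟶ 𝟙_ C)
    (hw₁ : pushout.inl _ _ ≫ w = meetHom c₁ c₃)
    (hw₂ : pushout.inr _ _ ≫ w = meetHom c₂ c₃) :
    (∃ f : pushout (joinFst c₁ c₂) (joinSnd c₁ c₂) ⊗ C₃ ⟶
        pushout (joinFst (meetHom c₁ c₃) (meetHom c₂ c₃))
          (joinSnd (meetHom c₁ c₃) (meetHom c₂ c₃)),
        f ≫ w = meetHom v c₃) ∧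
    (∃ g : pushout (joinFst (meetHom c₁ c₃) (meetHom c₂ c₃))
          (joinSnd (meetHom c₁ c₃) (meetHom c₂ c₃)) ⟶
        pushout (joinFst c₁ c₂) (joinSnd c₁ c₂) ⊗ C₃,
        g ≫ meetHom v c₃ = w) := by
  have := hR C₃
  have hP := h₃.isPushout_whiskerRight (.of_hasPushout (joinFst c₁ c₂) (joinSnd c₁ c₂))
  have hf : hP.isoPushout.hom ≫ w = meetHom v c₃ := by
    apply hP.hom_ext
    · rw [hP.inl_isoPushout_hom_assoc, hw₁, whiskerRight_comp_meetHom, hv₁]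
    · rw [hP.inr_isoPushout_hom_assoc, hw₂, whiskerRight_comp_meetHom, hv₂]
  exact ⟨⟨hP.isoPushout.hom, hf⟩, ⟨hP.isoPushout.inv, by rw [← hf, Iso.inv_hom_id_assoc]⟩⟩

/-- **distributivity.** Let `C` be a symmetric monoidal category with finite
colimits whose tensor product preserves finite colimits in each variable, and let
`(C₁, c₁)`, `(C₂, c₂)`, `(C₃, c₃)` be coidempotent objects.  Let `(V, v)` be the join
`c₁ ∨ c₂` (`V` the pushout of `C₁ ⟵ C₁ ⊗ C₂ ⟶ C₂`, `v` induced by `c₁, c₂`) and `(W, w)`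
the join `(c₁ ∧ c₃) ∨ (c₂ ∧ c₃)` of the meets `c₁ ∧ c₃` and `c₂ ∧ c₃`.  Then
`(c₁ ∨ c₂) ∧ c₃ = (V ⊗ C₃, v ∧ c₃)` and `(W, w)` are isomorphic as coidempotent objects:
each admits a morphism of coidempotent objects to the other. -/
theorem coidempotent_distrib [SymmetricCategory C] [HasFiniteColimits C]
    (hL : ∀ X : C, PreservesFiniteColimits (tensorLeft X))
    (hR : ∀ X : C, PreservesFiniteColimits (tensorRight X))
    {C₁ C₂ C₃ : C} (c₁ : C₁ ⟶ 𝟙_ C) (c₂ : C₂ ⟶ 𝟙_ C) (c₃ : C₃ ⟶ 𝟙_ C)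
    (h₁ : Coidempotent c₁) (h₂ : Coidempotent c₂) (h₃ : Coidempotent c₃)
    (v : pushout (joinFst c₁ c₂) (joinSnd c₁ c₂) ⟶ 𝟙_ C)
    (hv₁ : pushout.inl _ _ ≫ v = c₁) (hv₂ : pushout.inr _ _ ≫ v = c₂)
    (w : pushout (joinFst (meetHom c₁ c₃) (meetHom c₂ c₃))
        (joinSnd (meetHom c₁ c₃) (meetHom c₂ c₃)) ⟶ 𝟙_ C)
    (hw₁ : pushout.inl _ _ ≫ w = meetHom c₁ c₃)
    (hw₂ : pushout.inr _ _ ≫ w = meetHom c₂ c₃) :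
    (∃ f : pushout (joinFst c₁ c₂) (joinSnd c₁ c₂) ⊗ C₃ ⟶
        pushout (joinFst (meetHom c₁ c₃) (meetHom c₂ c₃))
          (joinSnd (meetHom c₁ c₃) (meetHom c₂ c₃)),
        f ≫ w = meetHom v c₃) ∧
    (∃ g : pushout (joinFst (meetHom c₁ c₃) (meetHom c₂ c₃))
          (joinSnd (meetHom c₁ c₃) (meetHom c₂ c₃)) ⟶
        pushout (joinFst c₁ c₂) (joinSnd c₁ c₂) ⊗ C₃,
        g ≫ meetHom v c₃ = w) :=
  coidempotent_distrib_general hR c₁ c₂ c₃ h₃ v hv₁ hv₂ w hw₁ hw₂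
end

section
/- Let C be a symmetric monoidal category with unit object 𝟙 having filtered colimits and such that the tensor product preserves filtered colimits in each variable. Let I be a nonempty directed partial order and let (C_i, c_i)_{i ∈ I} be a functor from I to the over category C/𝟙 such that each (C_i, c_i) is a coidempotent object. Let C_∞ = colim_{i ∈ I} C_i and let c_∞ : C_∞ → 𝟙 be the morphism induced by the c_i. Then (C_∞, c_∞) is a coidempotent object, and it is a least upper bound of the family (C_i, c_i) in the preorder of coidempotent objects. -/
open CategoryTheory CategoryTheory.Limits MonoidalCategory

universe v u

variable {C : Type u} [Category.{v} C] [MonoidalCategory C]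

/-!
Morphisms over `𝟙` into a coidempotent `(D, d)` are unique: if `f ≫ d = g ≫ d`, then
`f ▷ D = g ▷ D` because `d ▷ D` is invertible (by the braiding), and exchanging whiskers against
the epimorphism `X ◁ d` gives `f ▷ 𝟙 = g ▷ 𝟙`. So compatible maps `F i ⟶ D` form a cocone, which
gives the least upper bound property. Since `I` is filtered and `⊗` preserves filtered colimits
in each variable, morphisms out of `colim F ⊗ colim F` are determined on the diagonal terms
`F i ⊗ F i`; this lets one check that the map induced by the inverses of the `F i ◁ c i` inverts
`colim F ◁ c'`.
-/

lemma tensorHom_comp_whiskerLeft_of_comp_eq {X X' Z Z' Y : C} (f : X ⟶ X') {g : Z ⟶ Z'}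
    {a : Z' ⟶ Y} {b : Z ⟶ Y} (h : g ≫ a = b) :
    (f ⊗ₘ g) ≫ (X' ◁ a) = (X ◁ b) ≫ (f ▷ Y) := by
  rw [← h, MonoidalCategory.tensorHom_def, Category.assoc, ← whiskerLeft_comp, whisker_exchange]

namespace Coidempotent

variable [BraidedCategory C] {X D : C} {x : X ⟶ 𝟙_ C} {d : D ⟶ 𝟙_ C}

lemma isIso_whiskerRight (hx : Coidempotent x) : IsIso (x ▷ X) := by
  have : IsIso (X ◁ x) := hx
  have : IsIso ((x ▷ X) ≫ (β_ (𝟙_ C) X).hom) := by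
    rw [BraidedCategory.braiding_naturality_left]; infer_instance
  exact IsIso.of_isIso_comp_right _ (β_ _ _).hom

lemma hom_ext (hx : Coidempotent x) (hd : Coidempotent d) {f g : X ⟶ D}
    (hf : f ≫ d = x) (hg : g ≫ d = x) : f = g := by
  have : IsIso (d ▷ D) := hd.isIso_whiskerRight
  have : Epi (X ◁ d) := by
    have : IsIso (X ◁ f ≫ X ◁ d) := by rw [← whiskerLeft_comp, hf]; exact hx
    exact epi_of_epi (X ◁ f) _
  have h₁ : f ▷ D = g ▷ D := by
    rw [← cancel_mono (d ▷ D), ← comp_whiskerRight, ← comp_whiskerRight, hf, hg]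
  have h₂ : f ▷ 𝟙_ C = g ▷ 𝟙_ C := by
    rw [← cancel_epi (X ◁ d), whisker_exchange, whisker_exchange, h₁]
  simpa [whiskerRight_id] using h₂

end Coidempotent

section FilteredColimit

variable {J : Type*} [Category J] [IsFilteredOrEmpty J] {F : J ⥤ C} [HasColimit F]
  [∀ X : C, PreservesColimit F (tensorLeft X)] [∀ X : C, PreservesColimit F (tensorRight X)]

lemma colimit_tensor_hom_ext {Y : C} {f g : colimit F ⊗ colimit F ⟶ Y}
    (h : ∀ j, (colimit.ι F j ⊗ₘ colimit.ι F j) ≫ f = (colimit.ι F j ⊗ₘ colimit.ι F j) ≫ g) :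
    f = g := by
  have h₂ (i j : J) :
      (colimit.ι F i ⊗ₘ colimit.ι F j) ≫ f = (colimit.ι F i ⊗ₘ colimit.ι F j) ≫ g := by
    have e : colimit.ι F i ⊗ₘ colimit.ι F j =
        (F.map (IsFiltered.leftToMax i j) ⊗ₘ F.map (IsFiltered.rightToMax i j)) ≫
          (colimit.ι F _ ⊗ₘ colimit.ι F _) := by
      rw [tensorHom_comp_tensorHom, colimit.w, colimit.w]
    rw [e, Category.assoc, Category.assoc, h]
  refine (isColimitOfPreserves (tensorRight (colimit F)) (colimit.isColimit F)).hom_ext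
    fun i => ?_
  refine (isColimitOfPreserves (tensorLeft (F.obj i)) (colimit.isColimit F)).hom_ext fun j => ?_
  simpa [tensorHom_def'] using h₂ i j

lemma isIso_whiskerLeft_colimit {Y : C} (α : F ⟶ (Functor.const J).obj Y)
    [∀ j, IsIso (F.obj j ◁ α.app j)] {a : colimit F ⟶ Y} (ha : ∀ j, colimit.ι F j ≫ a = α.app j) :
    IsIso (colimit F ◁ a) := by
  have square {i j : J} (φ : i ⟶ j) :
      (F.map φ ⊗ₘ F.map φ) ≫ (F.obj j ◁ α.app j) = (F.obj i ◁ α.app i) ≫ (F.map φ ▷ Y) :=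
    tensorHom_comp_whiskerLeft_of_comp_eq _ (by simp)
  let s : Cocone (F ⋙ tensorRight Y) :=
    { pt := colimit F ⊗ colimit F
      ι.app j := inv (F.obj j ◁ α.app j) ≫ (colimit.ι F j ⊗ₘ colimit.ι F j)
      ι.naturality i j φ := by
        rw [← cancel_epi (F.obj i ◁ α.app i)]
        simp [← reassoc_of% (square φ), tensorHom_comp_tensorHom] }
  let hY := isColimitOfPreserves (tensorRight Y) (colimit.isColimit F)
  have hv (j : J) : (colimit.ι F j ▷ Y) ≫ hY.desc s =
      inv (F.obj j ◁ α.app j) ≫ (colimit.ι F j ⊗ₘ colimit.ι F j) := hY.fac s j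
  have hι (j : J) : (colimit.ι F j ⊗ₘ colimit.ι F j) ≫ (colimit F ◁ a) =
      (F.obj j ◁ α.app j) ≫ (colimit.ι F j ▷ Y) :=
    tensorHom_comp_whiskerLeft_of_comp_eq _ (ha j)
  refine ⟨hY.desc s, colimit_tensor_hom_ext fun j => ?_, hY.hom_ext fun j => ?_⟩
  · simp [reassoc_of% hι, hv]
  · simp [reassoc_of% hv, hι]

end FilteredColimit

theorem coidempotent_directed_join_general [SymmetricCategory C] [HasFilteredColimits C]
    (hL : ∀ X : C, PreservesFilteredColimits (tensorLeft X))
    {I : Type v} [PartialOrder I] [Nonempty I] [IsDirected I (· ≤ ·)]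
    (F : I ⥤ C) (c : F ⟶ (Functor.const I).obj (𝟙_ C))
    (hc : ∀ i : I, Coidempotent (c.app i))
    (c' : colimit F ⟶ 𝟙_ C) (hc' : ∀ i : I, colimit.ι F i ≫ c' = c.app i) :
    Coidempotent c' ∧
      (∀ i : I, ∃ f : F.obj i ⟶ colimit F, f ≫ c' = c.app i) ∧
      ∀ {D : C} (d : D ⟶ 𝟙_ C), Coidempotent d →
        (∀ i : I, ∃ f : F.obj i ⟶ D, f ≫ d = c.app i) →
        ∃ g : colimit F ⟶ D, g ≫ d = c' := by
  have : ∀ i, IsIso (F.obj i ◁ c.app i) := hc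
  refine ⟨isIso_whiskerLeft_colimit c hc', fun i => ⟨colimit.ι F i, hc' i⟩, fun {D} d hd hD => ?_⟩
  choose f hf using hD
  let t : Cocone F :=
    { pt := D
      ι.app := f
      ι.naturality i j φ := by
        simpa using Coidempotent.hom_ext (hc i) hd
          (by simp [hf j]) (hf i) }
  exact ⟨colimit.desc F t, colimit.hom_ext fun i => by simp [t, hf, hc']⟩

/-- Let `C` be a symmetric monoidal category with filtered colimits whose
tensor product preserves filtered colimits in each variable.  Let `I` be a nonempty directed
partial order, `F : I ⥤ C` a diagram, and `c : F ⟶ const 𝟙` a family of morphisms to `𝟙`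
(i.e. a functor from `I` to `C/𝟙`) such that each `(F i, c i)` is a coidempotent object.
Let `C_∞ = colim F` and let `c_∞ : C_∞ ⟶ 𝟙` be the induced morphism (characterized by
`colimit.ι F i ≫ c_∞ = c i`).  Then `(C_∞, c_∞)` is a coidempotent object and is a least
upper bound of the family `(F i, c i)` in the preorder of coidempotent objects. -/
theorem coidempotent_directed_join [SymmetricCategory C] [HasFilteredColimits C]
    (hL : ∀ X : C, PreservesFilteredColimits (tensorLeft X))
    (hR : ∀ X : C, PreservesFilteredColimits (tensorRight X))
    {I : Type v} [PartialOrder I] [Nonempty I] [IsDirected I (· ≤ ·)]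
    (F : I ⥤ C) (c : F ⟶ (Functor.const I).obj (𝟙_ C))
    (hc : ∀ i : I, Coidempotent (c.app i))
    (c' : colimit F ⟶ 𝟙_ C) (hc' : ∀ i : I, colimit.ι F i ≫ c' = c.app i) :
    Coidempotent c' ∧
      (∀ i : I, ∃ f : F.obj i ⟶ colimit F, f ≫ c' = c.app i) ∧
      ∀ {D : C} (d : D ⟶ 𝟙_ C), Coidempotent d →
        (∀ i : I, ∃ f : F.obj i ⟶ D, f ≫ d = c.app i) →
        ∃ g : colimit F ⟶ D, g ≫ d = c' :=
  coidempotent_directed_join_general hL F c hc c' hc'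
end

section
/- Let C be a category with finite products, regarded as a monoidal category via the cartesian monoidal structure (tensor = binary product, unit = terminal object ⊤). Then a morphism c : C₀ → ⊤ is a coidempotent object if and only if c is a monomorphism, i.e. if and only if C₀ is a subterminal object. Hence the preorder of coidempotent objects of (C, ×) is identified with the poset of subterminal objects of C. -/
open CategoryTheory CategoryTheory.Limits MonoidalCategory

universe v u

/-- The monoidal structure on a category with a terminal object and binary products
(formerly `CategoryTheory.monoidalOfHasFiniteProducts` in Mathlib). -/
noncomputable def CategoryTheory.monoidalOfHasFiniteProducts (C : Type u) [Category.{v} C]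
    [HasTerminal C] [HasBinaryProducts C] : MonoidalCategory C :=
  (CartesianMonoidalCategory.ofChosenFiniteProducts ⟨_, terminalIsTerminal⟩
    fun X Y => ⟨_, prodIsProd X Y⟩).toMonoidalCategory

attribute [local instance] CategoryTheory.monoidalOfHasFiniteProducts

/-!
`X ◁ c` followed by the right unitor is the projection `fst : X ⊗ X ⟶ X`, so `X ◁ c` is an
isomorphism iff `fst` is. The diagonal splits `fst`, hence `fst` is an isomorphism iff it is
mono, and `fst` is mono iff any two morphisms into `X` agree, i.e. iff `X` is subterminal.
-/

namespace CategoryTheory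

theorem isSubterminal_iff_mono_of_isTerminal {C : Type*} [Category C] {X T : C}
    (hT : IsTerminal T) (c : X ⟶ T) : IsSubterminal X ↔ Mono c := by
  obtain rfl : c = hT.from X := hT.hom_ext _ _
  exact ⟨fun hX => hX.mono_isTerminal_from hT, fun _ => isSubterminal_of_mono_isTerminal_from hT⟩

namespace CartesianMonoidalCategory

-- A cartesian monoidal structure yields `HasTerminal` and `HasBinaryProducts`, so the local
-- instance would otherwise supply a second monoidal structure for `𝟙_ C` and `◁`.
attribute [-instance] monoidalOfHasFiniteProducts

variable {C : Type*} [Category C] [CartesianMonoidalCategory C]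

theorem mono_fst_self_iff_isSubterminal (X : C) : Mono (fst X X) ↔ IsSubterminal X := by
  constructor
  · intro _ Z f g
    have hlift : lift f g = lift f f := by
      rw [← cancel_mono (fst X X), lift_fst, lift_fst]
    simpa using congrArg (· ≫ snd X X) hlift.symm
  · exact fun hX => ⟨fun u v _ => hom_ext u v (hX _ _) (hX _ _)⟩

theorem isIso_fst_self_iff_mono (X : C) : IsIso (fst X X) ↔ Mono (fst X X) := by
  refine ⟨fun _ => inferInstance, fun _ => ?_⟩
  have : IsSplitEpi (fst X X) := .mk' ⟨lift (𝟙 X) (𝟙 X), lift_fst _ _⟩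
  exact isIso_of_mono_of_isSplitEpi _

theorem isIso_whiskerLeft_iff_isIso_fst {X Y : C} (c : Y ⟶ 𝟙_ C) :
    IsIso (X ◁ c) ↔ IsIso (fst X Y) := by
  obtain rfl : c = toUnit Y := Subsingleton.elim _ _
  rw [← whiskerLeft_toUnit_comp_rightUnitor_hom, isIso_comp_right_iff]

theorem isIso_whiskerLeft_self_iff_mono {X : C} (c : X ⟶ 𝟙_ C) : IsIso (X ◁ c) ↔ Mono c := by
  rw [isIso_whiskerLeft_iff_isIso_fst, isIso_fst_self_iff_mono, mono_fst_self_iff_isSubterminal,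
    isSubterminal_iff_mono_of_isTerminal isTerminalTensorUnit]

end CartesianMonoidalCategory

end CategoryTheory

/-- Let `C` be a category with finite products, regarded as a monoidal
category via the cartesian monoidal structure (tensor = binary product, unit = terminal
object).  A morphism `c : C₀ ⟶ ⊤ = 𝟙_ C` is a coidempotent object (i.e.
`C₀ ◁ c : C₀ ⊗ C₀ ⟶ C₀ ⊗ ⊤` is an isomorphism) if and only if `c` is a monomorphism,
i.e. iff `C₀` is a subterminal object.  Hence the preorder of coidempotent objects of
`(C, ×)` is the poset of subterminal objects of `C`. -/
theorem cartesian_coidempotent_iff_mono {C : Type u} [Category.{v} C]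
    [HasTerminal C] [HasBinaryProducts C] {C₀ : C} (c : C₀ ⟶ 𝟙_ C) :
    IsIso (C₀ ◁ c) ↔ Mono c :=
  letI : CartesianMonoidalCategory C :=
    .ofChosenFiniteProducts ⟨_, terminalIsTerminal⟩ fun X Y => ⟨_, prodIsProd X Y⟩
  CartesianMonoidalCategory.isIso_whiskerLeft_self_iff_mono c
end

section
/- Let P be a partial order in which every nonempty directed subset has a least upper bound, and let C be a category having all filtered colimits. Then a functor F : P ⥤ C preserves filtered colimits (i.e. colimits of diagrams indexed by any small filtered category landing in P) if and only if for every nonempty directed subset D ⊆ P with least upper bound b, the cocone over the restriction of F to D (viewed as a full subposet of P) with apex F(b) and legs F(d ≤ b) is a colimit cocone in C. -/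
/-!
A directed subset `D` is a filtered category whose inclusion into `P` has colimit its least upper
bound `b`, so a functor preserving filtered colimits sends it to a colimit with apex `F b`.
Conversely, a filtered diagram `G : J ⥤ P` with colimit `c` has directed image with least upper
bound `c.pt`, and the corestriction of `G` to its image is final; so `F.mapCocone c` is, up to
whiskering along a final functor, the canonical cocone on the restriction of `F` to that image.
-/

open CategoryTheory CategoryTheory.Limits

universe v u

/-- The canonical cocone on the restriction of `F : P ⥤ C` to a subset `D ⊆ P`, with apex
`F b` for an upper bound `b` of `D`, with legs `F (d ≤ b)`. -/
@[simps]
def restrictionCocone {P : Type v} [PartialOrder P] {C : Type u} [Category.{v} C]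
    (F : P ⥤ C) (D : Set P) {b : P} (hb : b ∈ upperBounds D) :
    Cocone ((Subtype.mono_coe (· ∈ D)).functor ⋙ F) where
  pt := F.obj b
  ι :=
    { app := fun d => F.map (homOfLE (hb d.2))
      naturality := fun d d' f => by
        dsimp
        rw [Category.comp_id]
        exact (F.map_comp _ _).symm.trans (congrArg F.map (Subsingleton.elim _ _)) }

namespace DirectedOn

variable {P : Type v} [Preorder P]

theorem isFiltered {D : Set P} (hne : D.Nonempty) (hdir : DirectedOn (· ≤ ·) D) :
    IsFiltered D :=
  have := hne.to_subtype
  have := hdir.isDirectedOrder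
  inferInstance

end DirectedOn

namespace CategoryTheory.Functor

variable {J : Type*} [Category J] {P : Type v} [Preorder P]

theorem directedOn_range_obj [IsFilteredOrEmpty J] (G : J ⥤ P) :
    DirectedOn (· ≤ ·) (Set.range G.obj) := by
  rintro _ ⟨j, rfl⟩ _ ⟨j', rfl⟩
  exact ⟨_, Set.mem_range_self (IsFiltered.max j j'),
    (G.map (IsFiltered.leftToMax j j')).le, (G.map (IsFiltered.rightToMax j j')).le⟩

@[simps]
def corestrictRange (G : J ⥤ P) : J ⥤ Set.range G.obj where
  obj j := ⟨G.obj j, Set.mem_range_self j⟩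
  map f := homOfLE (G.map f).le

instance final_corestrictRange [IsFilteredOrEmpty J] (G : J ⥤ P) : G.corestrictRange.Final :=
  final_of_exists_of_isFiltered _ (fun ⟨_, j, hj⟩ => ⟨j, ⟨homOfLE hj.ge⟩⟩)
    (fun _ _ => ⟨_, 𝟙 _, Subsingleton.elim _ _⟩)

end CategoryTheory.Functor

section

variable {P : Type v} [PartialOrder P] {C : Type u} [Category.{v} C]

noncomputable def isColimitRestrictionCoconeOfPreserves (F : P ⥤ C) {D : Set P}
    [PreservesColimit (Subtype.mono_coe (· ∈ D)).functor F] {b : P} (hb : IsLUB D b) :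
    IsColimit (restrictionCocone F D hb.1) :=
  have hb' : IsLUB (Set.range (Subtype.mono_coe (· ∈ D)).functor.obj) b := by simpa using hb
  isColimitOfPreserves F (Preorder.isColimitOfIsLUB _ (Preorder.coconeOfUpperBound _ hb'.1) hb')

/-- The cocone `restrictionCocone F _ _` whiskered along `G.corestrictRange` is `F.mapCocone c`
on the nose, since morphisms in `P` are proofs. -/
noncomputable def isColimitMapCoconeOfIsColimitRestrictionCocone {J : Type*} [Category J]
    [IsFilteredOrEmpty J] {G : J ⥤ P} {c : Cocone G} (hc : IsColimit c) (F : P ⥤ C)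
    (h : IsColimit (restrictionCocone F _ (Preorder.isLUB_of_isColimit G hc).1)) :
    IsColimit (F.mapCocone c) :=
  (Functor.Final.isColimitWhiskerEquiv G.corestrictRange _).symm h

end

theorem preservesFilteredColimits_iff_directed_lub_general {P : Type v} [PartialOrder P]
    {C : Type u} [Category.{v} C] (F : P ⥤ C) :
    PreservesFilteredColimitsOfSize.{v, v} F ↔
      ∀ (D : Set P), D.Nonempty → DirectedOn (· ≤ ·) D →
        ∀ (b : P) (hb : IsLUB D b),
          Nonempty (IsColimit (restrictionCocone F D hb.1)) := by
  refine ⟨fun _ D hne hdir b hb => ?_, fun h => ⟨fun J _ _ => ⟨fun {G} => ⟨fun {c} hc => ?_⟩⟩⟩⟩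
  · have := hdir.isFiltered hne
    exact ⟨isColimitRestrictionCoconeOfPreserves F hb⟩
  · have : Nonempty J := IsFiltered.nonempty
    obtain ⟨hcol⟩ := h _ (Set.range_nonempty G.obj) G.directedOn_range_obj c.pt
      (Preorder.isLUB_of_isColimit G hc)
    exact ⟨isColimitMapCoconeOfIsColimitRestrictionCocone hc F hcol⟩

/-- Let `P` be a partial order in which every nonempty directed subset has
a least upper bound, and `C` a category with all filtered colimits.  A functor `F : P ⥤ C`
preserves filtered colimits if and only if for every nonempty directed subset `D ⊆ P` with
least upper bound `b`, the canonical cocone with apex `F b` on the restriction of `F` to `D`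
is a colimit cocone. -/
theorem preservesFilteredColimits_iff_directed_lub {P : Type v} [PartialOrder P]
    (hP : ∀ D : Set P, D.Nonempty → DirectedOn (· ≤ ·) D → ∃ b, IsLUB D b)
    {C : Type u} [Category.{v} C] [HasFilteredColimits C] (F : P ⥤ C) :
    PreservesFilteredColimitsOfSize.{v, v} F ↔
      ∀ (D : Set P), D.Nonempty → DirectedOn (· ≤ ·) D →
        ∀ (b : P) (hb : IsLUB D b),
          Nonempty (IsColimit (restrictionCocone F D hb.1)) :=
  preservesFilteredColimits_iff_directed_lub_general F
end

section
/- Let D be a bounded distributive lattice, C a category with small limits, and 𝓕 : Dᵒᵖ ⥤ C a presheaf on D (regarded as a category). Then the following are equivalent. (a) For every finite subset S ⊆ D with downward closure R = {u ∈ D | u ≤ s for some s ∈ S}, the canonical cone with apex 𝓕(⋁ S) over the restriction of 𝓕 to R is a limit cone (the sheaf condition for the finite cover topology). (b) The following two conditions hold: (i) 𝓕(⊥) is a terminal object of C; (ii) for all V, V' ∈ D the square with vertices 𝓕(V ∨ V'), 𝓕(V), 𝓕(V'), 𝓕(V ∧ V') formed by the restriction maps is a pullback square. -/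
open CategoryTheory CategoryTheory.Limits Opposite

universe u v₂ u₂

/-- The canonical cone on the restriction of a presheaf `𝓕` on a bounded distributive
lattice `D` to the downward closure of a finite subset `S`, with apex `𝓕 (⋁ S)`. -/
@[simps]
def finiteCoverCone {D : Type u} [DistribLattice D] [BoundedOrder D]
    {C : Type u₂} [Category.{v₂} C] (𝓕 : Dᵒᵖ ⥤ C) (S : Finset D) :
    Cone (((Subtype.mono_coe fun u : D => ∃ s ∈ S, u ≤ s).functor).op ⋙ 𝓕) where
  pt := 𝓕.obj (op (S.sup id))
  π :=
    { app := fun U => 𝓕.map (op (homOfLE (by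
        obtain ⟨s, hs, hle⟩ := U.unop.2
        exact hle.trans (Finset.le_sup (f := id) hs))))
      naturality := fun U U' f => by
        dsimp
        rw [Category.id_comp, ← 𝓕.map_comp]
        rfl }

/-!
The empty cover of `⊥` and the cover `{V, V'}` of `V ⊔ V'` give (i) and (ii). Conversely, argue
by induction on `|S|`. Write `S = insert a S'` and `W = ⋁ S'`. A compatible family on the cover
`S` consists of a section over `a` and a compatible family on `S'`, which glues to a section
over `W` by induction. These two sections agree on `a ⊓ W`, because by distributivity `a ⊓ W` is
covered by the smaller family `{a ⊓ s | s ∈ S'}`. The pullback square over `a ⊔ W` then glues them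
uniquely.
-/

namespace FiniteCover

section Preorder

variable {D : Type u} [Preorder D] {C : Type u₂} [Category.{v₂} C] (F : Dᵒᵖ ⥤ C)

abbrev res {u v : D} (h : u ≤ v) : F.obj (op v) ⟶ F.obj (op u) := F.map (op (homOfLE h))

@[simp]
lemma res_comp_res {u v w : D} (h : u ≤ v) (h' : v ≤ w) :
    res F h' ≫ res F h = res F (h.trans h') := by
  rw [← F.map_comp]; rfl

@[simp]
lemma res_refl (u : D) : res F (le_refl u) = 𝟙 _ := F.map_id _

abbrev diagram (S : Finset D) : (Subtype fun u : D => ∃ s ∈ S, u ≤ s)ᵒᵖ ⥤ C :=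
  ((Subtype.mono_coe fun u : D => ∃ s ∈ S, u ≤ s).functor).op ⋙ F

/-- The apex is any upper bound `v` of `S`, so that `⋁ S` can be traded for an equal expression
(`isLimit_congr`). -/
def cone (S : Finset D) (v : D) (hv : ∀ s ∈ S, s ≤ v) : Cone (diagram F S) where
  pt := F.obj (op v)
  π :=
    { app := fun U => res F (by
        obtain ⟨s, hs, hle⟩ := U.unop.2
        exact hle.trans (hv s hs))
      naturality := fun U U' f => by
        dsimp
        rw [Category.id_comp, ← F.map_comp]
        rfl }

variable {F}

lemma π_app_comp_res {S : Finset D} (c : Cone (diagram F S)) {u v : D}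
    (hu : ∃ s ∈ S, u ≤ s) (hv : ∃ s ∈ S, v ≤ s) (h : u ≤ v) :
    c.π.app (op ⟨v, hv⟩) ≫ res F h = c.π.app (op ⟨u, hu⟩) :=
  c.w (homOfLE (show (⟨u, hu⟩ : Subtype _) ≤ ⟨v, hv⟩ from h)).op

def coneOfCompatible (S : Finset D) {X : C} (x : ∀ u, (∃ s ∈ S, u ≤ s) → (X ⟶ F.obj (op u)))
    (hx : ∀ u v hu hv (h : u ≤ v), x v hv ≫ res F h = x u hu) : Cone (diagram F S) where
  pt := X
  π :=
    { app := fun U => x U.unop.1 U.unop.2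
      naturality := fun U U' f => by
        dsimp
        rw [Category.id_comp]
        exact (hx _ _ _ _ (leOfHom f.unop)).symm }

variable {S : Finset D} {v : D}

lemma lift_comp_res {hv : ∀ s ∈ S, s ≤ v} (h : IsLimit (cone F S v hv))
    (c : Cone (diagram F S)) {u : D} (hu : ∃ s ∈ S, u ≤ s) (huv : u ≤ v) :
    h.lift c ≫ res F huv = c.π.app (op ⟨u, hu⟩) :=
  h.fac c (op ⟨u, hu⟩)

lemma hom_ext {hv : ∀ s ∈ S, s ≤ v} (h : IsLimit (cone F S v hv)) {X : C}
    {f g : X ⟶ F.obj (op v)}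
    (hfg : ∀ s (hs : s ∈ S), f ≫ res F (hv s hs) = g ≫ res F (hv s hs)) : f = g := by
  refine h.hom_ext fun ⟨u, s, hs, hus⟩ => ?_
  show f ≫ res F (hus.trans (hv s hs)) = g ≫ res F (hus.trans (hv s hs))
  rw [← res_comp_res F hus (hv s hs), ← Category.assoc, hfg s hs, Category.assoc]

lemma isLimit_congr {hv : ∀ s ∈ S, s ≤ v} {S' : Finset D} {v' : D} {hv' : ∀ s ∈ S', s ≤ v'}
    (hS : S = S') (hvv' : v = v') :
    Nonempty (IsLimit (cone F S v hv)) ↔ Nonempty (IsLimit (cone F S' v' hv')) := by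
  subst hS hvv'; rfl

def coneRestrict {S T : Finset D} (hTS : ∀ t ∈ T, ∃ s ∈ S, t ≤ s) (c : Cone (diagram F S)) :
    Cone (diagram F T) :=
  coneOfCompatible T
    (fun u hu => c.π.app (op ⟨u, by
      obtain ⟨t, ht, hut⟩ := hu
      exact (hTS t ht).imp fun _ ⟨hs, hts⟩ => ⟨hs, hut.trans hts⟩⟩))
    (fun _ _ _ _ h => π_app_comp_res c _ _ h)

def isLimitEmpty {hv : ∀ s ∈ (∅ : Finset D), s ≤ v} (ht : IsTerminal (F.obj (op v))) :
    IsLimit (cone F ∅ v hv) where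
  lift c := ht.from c.pt
  fac _ := fun ⟨_, s, hs, _⟩ => absurd hs (Finset.notMem_empty s)
  uniq _ _ _ := ht.hom_ext _ _

def isTerminalOfIsLimitEmpty {hv : ∀ s ∈ (∅ : Finset D), s ≤ v} (h : IsLimit (cone F ∅ v hv)) :
    IsTerminal (F.obj (op v)) :=
  IsTerminal.ofUniqueHom
    (fun X => h.lift (coneOfCompatible ∅ (X := X) (fun _ hu => absurd hu (by simp))
      (fun _ _ _ hv => absurd hv (by simp))))
    (fun _ _ => hom_ext h (by simp))

def isLimitSingleton (v : D) : IsLimit (cone F {v} v (by simp)) where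
  lift c := c.π.app (op ⟨v, v, Finset.mem_singleton_self v, le_rfl⟩)
  fac c := fun ⟨u, s, hs, hus⟩ => by
    obtain rfl := Finset.mem_singleton.1 hs
    exact π_app_comp_res c _ _ hus
  uniq c m hm := by
    rw [← hm (op ⟨v, v, Finset.mem_singleton_self v, le_rfl⟩)]
    exact (Category.comp_id m).symm.trans (congrArg (m ≫ ·) (res_refl F v).symm)

end Preorder

section Lattice

variable {D : Type u} [Lattice D] [DecidableEq D] {C : Type u₂} [Category.{v₂} C] {F : Dᵒᵖ ⥤ C}
  {a : D} {S : Finset D}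

section Glue

variable (c : Cone (diagram F S)) (x : c.pt ⟶ F.obj (op a))

open Classical in
noncomputable def glueApp (u : D) (hu : ∃ t ∈ insert a S, u ≤ t) : c.pt ⟶ F.obj (op u) :=
  if h : u ≤ a then x ≫ res F h
  else c.π.app (op ⟨u, ((Finset.exists_mem_insert a S (u ≤ ·)).1 hu).resolve_left h⟩)

lemma glueApp_of_le {u : D} (hu : ∃ t ∈ insert a S, u ≤ t) (h : u ≤ a) :
    glueApp c x u hu = x ≫ res F h := by
  simp [glueApp, h]

variable {c x}

lemma glueApp_of_mem (hx : ∀ u hu (h : u ≤ a), x ≫ res F h = c.π.app (op ⟨u, hu⟩)) {u : D}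
    (hu : ∃ t ∈ insert a S, u ≤ t) (hu' : ∃ t ∈ S, u ≤ t) :
    glueApp c x u hu = c.π.app (op ⟨u, hu'⟩) := by
  by_cases h : u ≤ a
  · rw [glueApp_of_le c x hu h, hx u hu' h]
  · exact dif_neg h

noncomputable def coneInsert (hx : ∀ u hu (h : u ≤ a), x ≫ res F h = c.π.app (op ⟨u, hu⟩)) :
    Cone (diagram F (insert a S)) :=
  coneOfCompatible _ (glueApp c x) fun u v hu hv huv => by
    rcases (Finset.exists_mem_insert a S (v ≤ ·)).1 hv with hva | hv'
    · rw [glueApp_of_le c x hv hva, glueApp_of_le c x hu (huv.trans hva), Category.assoc,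
        res_comp_res]
    · have hu' : ∃ t ∈ S, u ≤ t := hv'.imp fun _ ⟨ht, hvt⟩ => ⟨ht, huv.trans hvt⟩
      rw [glueApp_of_mem hx hv hv', glueApp_of_mem hx hu hu']
      exact π_app_comp_res c hu' hv' huv

end Glue

variable {W : D} {hv : ∀ s ∈ insert a S, s ≤ a ⊔ W}

lemma hom_ext_insert (hW : ∀ s ∈ S, s ≤ W) (h : IsLimit (cone F (insert a S) (a ⊔ W) hv))
    {X : C} {f g : X ⟶ F.obj (op (a ⊔ W))} (ha : f ≫ res F le_sup_left = g ≫ res F le_sup_left)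
    (hW' : f ≫ res F (le_sup_right : W ≤ a ⊔ W) = g ≫ res F le_sup_right) : f = g := by
  refine hom_ext h fun s hs => ?_
  rcases Finset.mem_insert.1 hs with rfl | hs
  · exact ha
  · rw [← res_comp_res F (hW s hs) le_sup_right, ← Category.assoc, hW', Category.assoc]

lemma isPullback_of_isLimit_insert {hW : ∀ s ∈ S, s ≤ W} (hS : IsLimit (cone F S W hW))
    (h : IsLimit (cone F (insert a S) (a ⊔ W) hv)) :
    IsPullback (res F (le_sup_left : a ≤ a ⊔ W)) (res F (le_sup_right : W ≤ a ⊔ W))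
      (res F (inf_le_left : a ⊓ W ≤ a)) (res F (inf_le_right : a ⊓ W ≤ W)) := by
  have w : res F (le_sup_left : a ≤ a ⊔ W) ≫ res F inf_le_left =
      res F le_sup_right ≫ res F inf_le_right := by
    simp only [res_comp_res]
  have compat (s : PullbackCone (res F (inf_le_left : a ⊓ W ≤ a)) (res F inf_le_right))
      (u : D) (hu : ∃ t ∈ S, u ≤ t) (hua : u ≤ a) :
      s.fst ≫ res F hua = ((cone F S W hW).extend s.snd).π.app (op ⟨u, hu⟩) := by
    obtain ⟨t, ht, hut⟩ := hu
    have huW : u ≤ a ⊓ W := le_inf hua (hut.trans (hW t ht))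
    calc s.fst ≫ res F hua = s.fst ≫ res F inf_le_left ≫ res F huW := by rw [res_comp_res]
      _ = s.snd ≫ res F inf_le_right ≫ res F huW := by
        rw [← Category.assoc, s.condition, Category.assoc]
      _ = _ := by rw [res_comp_res]; rfl
  let lift (s : PullbackCone (res F (inf_le_left : a ⊓ W ≤ a)) (res F inf_le_right)) :
      s.pt ⟶ F.obj (op (a ⊔ W)) :=
    h.lift (coneInsert (c := (cone F S W hW).extend s.snd) (x := s.fst) (compat s))
  have lift_fst (s) : lift s ≫ res F le_sup_left = s.fst := by
    have ha : ∃ t ∈ insert a S, a ≤ t := ⟨a, Finset.mem_insert_self a S, le_rfl⟩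
    exact (lift_comp_res h _ ha _).trans ((glueApp_of_le _ _ ha le_rfl).trans (by simp))
  have lift_snd (s) : lift s ≫ res F le_sup_right = s.snd := by
    refine hom_ext hS fun t ht => ?_
    rw [Category.assoc, res_comp_res]
    exact (lift_comp_res h _ ⟨t, Finset.mem_insert_of_mem ht, le_rfl⟩ _).trans
      (glueApp_of_mem (compat s) ⟨t, Finset.mem_insert_of_mem ht, le_rfl⟩ ⟨t, ht, le_rfl⟩)
  exact IsPullback.of_isLimit (PullbackCone.IsLimit.mk w lift lift_fst lift_snd
    fun s _ hma hmW => hom_ext_insert hW h ((hma.trans (lift_fst s).symm))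
      (hmW.trans (lift_snd s).symm))

noncomputable def isLimitInsert {hW : ∀ s ∈ S, s ≤ W} {T : Finset D}
    {hT : ∀ t ∈ T, t ≤ a ⊓ W}
    (hpb : IsPullback (res F (le_sup_left : a ≤ a ⊔ W)) (res F (le_sup_right : W ≤ a ⊔ W))
      (res F (inf_le_left : a ⊓ W ≤ a)) (res F (inf_le_right : a ⊓ W ≤ W)))
    (hS : IsLimit (cone F S W hW)) (hT : IsLimit (cone F T (a ⊓ W) hT))
    (hTS : ∀ t ∈ T, ∃ s ∈ S, t ≤ s) : IsLimit (cone F (insert a S) (a ⊔ W) hv) := by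
  have ha : ∃ t ∈ insert a S, a ≤ t := ⟨a, Finset.mem_insert_self a S, le_rfl⟩
  have hSa : ∀ s ∈ S, ∃ t ∈ insert a S, s ≤ t :=
    fun s hs => ⟨s, Finset.mem_insert_of_mem hs, le_rfl⟩
  let liftA (c : Cone (diagram F (insert a S))) : c.pt ⟶ F.obj (op a) := c.π.app (op ⟨a, ha⟩)
  let liftW (c : Cone (diagram F (insert a S))) : c.pt ⟶ F.obj (op W) :=
    hS.lift (coneRestrict hSa c)
  have compat (c : Cone (diagram F (insert a S))) :
      liftA c ≫ res F inf_le_left = liftW c ≫ res F inf_le_right := by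
    refine hom_ext hT fun t ht => ?_
    obtain ⟨s, hs, hts⟩ := hTS t ht
    have htS : ∃ s ∈ insert a S, t ≤ s := ⟨s, Finset.mem_insert_of_mem hs, hts⟩
    rw [Category.assoc, Category.assoc, res_comp_res, res_comp_res]
    exact (π_app_comp_res c htS ha _).trans
      (lift_comp_res hS (coneRestrict hSa c) ⟨s, hs, hts⟩ _).symm
  let lift (c : Cone (diagram F (insert a S))) : c.pt ⟶ F.obj (op (a ⊔ W)) :=
    hpb.lift _ _ (compat c)
  have lift_fst (c) : lift c ≫ res F le_sup_left = liftA c := hpb.lift_fst _ _ _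
  have lift_snd (c) : lift c ≫ res F le_sup_right = liftW c := hpb.lift_snd _ _ _
  refine
    { lift := lift
      fac := fun c ⟨u, t, ht, hut⟩ => ?_
      uniq := fun c m hm => ?_ }
  · show lift c ≫ res F (hut.trans (hv t ht)) = _
    rcases Finset.mem_insert.1 ht with rfl | ht
    · rw [← res_comp_res F hut le_sup_left, ← Category.assoc, lift_fst]
      exact π_app_comp_res c _ _ hut
    · rw [← res_comp_res F (hut.trans (hW t ht)) le_sup_right, ← Category.assoc, lift_snd]
      exact lift_comp_res hS _ ⟨t, ht, hut⟩ _
  · change c.pt ⟶ F.obj (op (a ⊔ W)) at m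
    refine hpb.hom_ext ?_ ?_
    · rw [lift_fst]
      exact hm (op ⟨a, ha⟩)
    · rw [lift_snd]
      refine hom_ext hS fun s hs => ?_
      rw [Category.assoc, res_comp_res]
      exact (hm (op ⟨s, hSa s hs⟩)).trans
        (lift_comp_res hS (coneRestrict hSa c) ⟨s, hs, le_rfl⟩ _).symm

end Lattice

section DistribLattice

variable {D : Type u} [DistribLattice D] [OrderBot D] {C : Type u₂} [Category.{v₂} C]
  {F : Dᵒᵖ ⥤ C}

lemma nonempty_isLimit_of_isTerminal_of_isPullback (ht : IsTerminal (F.obj (op ⊥)))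
    (hpb : ∀ V V' : D, IsPullback (res F (le_sup_left : V ≤ V ⊔ V'))
      (res F (le_sup_right : V' ≤ V ⊔ V')) (res F (inf_le_left : V ⊓ V' ≤ V))
      (res F (inf_le_right : V ⊓ V' ≤ V')))
    (S : Finset D) :
    Nonempty (IsLimit (cone F S (S.sup id) fun _ => Finset.le_sup (f := id))) := by
  classical
  induction hn : S.card using Nat.strong_induction_on generalizing S with
  | _ n ih =>
  rcases S.eq_empty_or_nonempty with rfl | ⟨a, ha⟩
  · exact ⟨isLimitEmpty ht⟩
  obtain ⟨S', haS', rfl⟩ : ∃ S', a ∉ S' ∧ S = insert a S' :=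
    ⟨S.erase a, Finset.notMem_erase a S, (Finset.insert_erase ha).symm⟩
  have hcard : S'.card < n := hn ▸ Finset.card_lt_card (Finset.ssubset_insert haS')
  obtain ⟨hS'⟩ := ih _ hcard S' rfl
  have hTle : ∀ t ∈ S'.image (a ⊓ ·), t ≤ a ⊓ S'.sup id := by
    simp only [Finset.mem_image]
    rintro _ ⟨s, hs, rfl⟩
    exact inf_le_inf_left a (Finset.le_sup (f := id) hs)
  obtain ⟨hT⟩ := (isLimit_congr (hv' := hTle) rfl (by
      rw [Finset.sup_image]; exact (Finset.sup_inf_distrib_left S' id a).symm)).1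
    (ih _ (Finset.card_image_le.trans_lt hcard) _ rfl)
  refine (isLimit_congr rfl Finset.sup_insert.symm).1
    ⟨isLimitInsert (hv := fun s hs => (Finset.le_sup (f := id) hs).trans_eq Finset.sup_insert)
      (hpb a (S'.sup id)) hS' hT ?_⟩
  intro t ht
  obtain ⟨s, hs, rfl⟩ := Finset.mem_image.1 ht
  exact ⟨s, hs, inf_le_right⟩

end DistribLattice

lemma finiteCoverCone_eq_cone {D : Type u} [DistribLattice D] [BoundedOrder D] {C : Type u₂}
    [Category.{v₂} C] (F : Dᵒᵖ ⥤ C) (S : Finset D) :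
    finiteCoverCone F S = cone F S (S.sup id) fun _ => Finset.le_sup (f := id) :=
  rfl

end FiniteCover

theorem sheaf_condition_iff_distribLattice_general {D : Type u} [DistribLattice D] [BoundedOrder D]
    {C : Type u₂} [Category.{v₂} C] (𝓕 : Dᵒᵖ ⥤ C) :
    (∀ S : Finset D, Nonempty (IsLimit (finiteCoverCone 𝓕 S))) ↔
      (Nonempty (IsTerminal (𝓕.obj (op (⊥ : D)))) ∧
        ∀ V V' : D,
          IsPullback (𝓕.map (op (homOfLE (le_sup_left : V ≤ V ⊔ V'))))
            (𝓕.map (op (homOfLE (le_sup_right : V' ≤ V ⊔ V'))))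
            (𝓕.map (op (homOfLE (inf_le_left : V ⊓ V' ≤ V))))
            (𝓕.map (op (homOfLE (inf_le_right : V ⊓ V' ≤ V'))))) := by
  classical
  simp only [FiniteCover.finiteCoverCone_eq_cone]
  refine ⟨fun h => ⟨⟨FiniteCover.isTerminalOfIsLimitEmpty (h ∅).some⟩, fun V V' => ?_⟩,
    fun ⟨⟨ht⟩, hpb⟩ => FiniteCover.nonempty_isLimit_of_isTerminal_of_isPullback ht hpb⟩
  obtain ⟨hVV'⟩ :=
    (FiniteCover.isLimit_congr (v' := V ⊔ V') (hv' := by simp) rfl (by simp)).1 (h {V, V'})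
  exact FiniteCover.isPullback_of_isLimit_insert (FiniteCover.isLimitSingleton V') hVV'

/-- Let `D` be a bounded distributive lattice, `C` a category with small
limits, and `𝓕 : Dᵒᵖ ⥤ C` a presheaf.  The following are equivalent:
(a) for every finite subset `S ⊆ D` with downward closure `R`, the canonical cone with apex
`𝓕 (⋁ S)` over the restriction of `𝓕` to `R` is a limit cone (the sheaf condition for the
finite cover topology);
(b) (i) `𝓕 ⊥` is terminal, and (ii) for all `V, V'` the square with vertices `𝓕 (V ⊔ V')`,
`𝓕 V`, `𝓕 V'`, `𝓕 (V ⊓ V')` is a pullback. -/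
theorem sheaf_condition_iff_distribLattice {D : Type u} [DistribLattice D] [BoundedOrder D]
    {C : Type u₂} [Category.{v₂} C] [HasLimitsOfSize.{u, u} C] (𝓕 : Dᵒᵖ ⥤ C) :
    (∀ S : Finset D, Nonempty (IsLimit (finiteCoverCone 𝓕 S))) ↔
      (Nonempty (IsTerminal (𝓕.obj (op (⊥ : D)))) ∧
        ∀ V V' : D,
          IsPullback (𝓕.map (op (homOfLE (le_sup_left : V ≤ V ⊔ V'))))
            (𝓕.map (op (homOfLE (le_sup_right : V' ≤ V ⊔ V'))))
            (𝓕.map (op (homOfLE (inf_le_left : V ⊓ V' ≤ V))))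
            (𝓕.map (op (homOfLE (inf_le_right : V ⊓ V' ≤ V'))))) :=
  sheaf_condition_iff_distribLattice_general 𝓕
end
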